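/- Suppose p > p_S. Then (u*)'(s) = −θ A s^{−θ−1}(1 + o(1)) as s ↓ 0 (that is, s^{θ+1}(u*)'(s) → −θA as s → 0⁺), and for every δ > 0 the integral ∫₀^δ (u*(s)² + (u*)'(s)²) s^{N−1} ds is finite. -/

import Mathlib

open Real Set Filter Topology MeasureTheory

noncomputable section

/-- The nonlinearity `f(u) = -u + u^p`. -/
def fNL (p u : ℝ) : ℝ := -u + u ^ p

/-- The Sobolev critical exponent `p_S = (N+2)/(N-2)`. -/
def pSob (N : ℕ) : ℝ := ((N : ℝ) + 2) / ((N : ℝ) - 2)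

/-- `θ = 2/(p-1)`. -/
def thetaP (p : ℝ) : ℝ := 2 / (p - 1)

/-- `A = (θ(N-2-θ))^{1/(p-1)}`. -/
def Aconst (N : ℕ) (p : ℝ) : ℝ :=
  (thetaP p * ((N : ℝ) - 2 - thetaP p)) ^ (1 / (p - 1))

/-- `m = (θ(N-2-θ))^{-1/2}`. -/
def mConst (N : ℕ) (p : ℝ) : ℝ :=
  (thetaP p * ((N : ℝ) - 2 - thetaP p)) ^ (-(1 / 2) : ℝ)

/-- `α = m(N-2-2θ)`. -/
def alphaConst (N : ℕ) (p : ℝ) : ℝ :=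
  mConst N p * ((N : ℝ) - 2 - 2 * thetaP p)

/-- The condition `p < p_JL`, where `p_JL = 1 + 4/(N-4-2√(N-1))` for `N ≥ 11` and
`p_JL = ∞` for `N ≤ 10`. -/
def pJLcond (N : ℕ) (p : ℝ) : Prop :=
  11 ≤ N → p < 1 + 4 / ((N : ℝ) - 4 - 2 * Real.sqrt ((N : ℝ) - 1))

/-- `y` is a C² solution of `y'' + α y' - y + y^p - m² e^{2mt} y = 0` on `(-∞, T]`
with `y → 1` as `t → -∞`; `y'`, `y''` are its first and second derivatives. -/
def IsSingODEOn (N : ℕ) (p T : ℝ) (y y' y'' : ℝ → ℝ) : Prop :=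
  (∀ t ∈ Iic T, HasDerivWithinAt y (y' t) (Iic T) t) ∧
  (∀ t ∈ Iic T, HasDerivWithinAt y' (y'' t) (Iic T) t) ∧
  ContinuousOn y'' (Iic T) ∧
  (∀ t ∈ Iic T, y'' t + alphaConst N p * y' t - y t + y t ^ p
      - (mConst N p) ^ 2 * Real.exp (2 * mConst N p * t) * y t = 0) ∧
  Tendsto y atBot (𝓝 1)

/-- `y` is a C² solution of `y'' + α y' - y + y^p - m² e^{2mt} y = 0` on all of `ℝ`
with `y → 1` as `t → -∞`. -/
def IsEntireSingODE (N : ℕ) (p : ℝ) (y y' y'' : ℝ → ℝ) : Prop :=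
  (∀ t : ℝ, HasDerivAt y (y' t) t) ∧
  (∀ t : ℝ, HasDerivAt y' (y'' t) t) ∧
  Continuous y'' ∧
  (∀ t : ℝ, y'' t + alphaConst N p * y' t - y t + y t ^ p
      - (mConst N p) ^ 2 * Real.exp (2 * mConst N p * t) * y t = 0) ∧
  Tendsto y atBot (𝓝 1)

/-- The singular solution `u*(s) = A s^{-θ} y*(m⁻¹ log s)` built from `y*`. -/
def ustar (N : ℕ) (p : ℝ) (y : ℝ → ℝ) (s : ℝ) : ℝ :=
  Aconst N p * s ^ (-(thetaP p)) * y (Real.log s / mConst N p)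

/-- `u` is a C² solution on `[0,∞)` of the IVP `u'' + ((N-1)/s)u' + f(u) = 0`,
`u(0) = γ`, `u'(0) = 0`, with nonlinearity `f(u) = -u + u^p`. -/
def IsIVPSol (N : ℕ) (p γ : ℝ) (u u' u'' : ℝ → ℝ) : Prop :=
  (∀ s ∈ Ici (0:ℝ), HasDerivWithinAt u (u' s) (Ici 0) s) ∧
  (∀ s ∈ Ici (0:ℝ), HasDerivWithinAt u' (u'' s) (Ici 0) s) ∧
  ContinuousOn u'' (Ici 0) ∧
  u 0 = γ ∧ u' 0 = 0 ∧
  (∀ s > (0:ℝ), u'' s + ((N : ℝ) - 1) / s * u' s + fNL p (u s) = 0)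

/-- `u` is a C² solution on `[0,∞)` of the IVP `u'' + ((N-1)/ρ)u' + u^p = 0`,
`u(0) = γ`, `u'(0) = 0`. -/
def IsBarSol (N : ℕ) (p γ : ℝ) (u u' u'' : ℝ → ℝ) : Prop :=
  (∀ ρ ∈ Ici (0:ℝ), HasDerivWithinAt u (u' ρ) (Ici 0) ρ) ∧
  (∀ ρ ∈ Ici (0:ℝ), HasDerivWithinAt u' (u'' ρ) (Ici 0) ρ) ∧
  ContinuousOn u'' (Ici 0) ∧
  u 0 = γ ∧ u' 0 = 0 ∧
  (∀ ρ > (0:ℝ), u'' ρ + ((N : ℝ) - 1) / ρ * u' ρ + u ρ ^ p = 0)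

/-- `s` is the `(k+1)`-th positive critical point of a function whose derivative is `u'`:
`s` is a positive critical point having exactly `k` positive critical points below it. -/
def IsNthCritPt (u' : ℝ → ℝ) (k : ℕ) (s : ℝ) : Prop :=
  0 < s ∧ u' s = 0 ∧ {x : ℝ | 0 < x ∧ x < s ∧ u' x = 0}.encard = (k : ℕ∞)

/-- `U` is a positive C² radial solution of the Neumann problem
`U'' + ((N-1)/r)U' + λ f(U) = 0` on `(0,1)`, `U'(0) = U'(1) = 0`, `U > 0` on `[0,1]`. -/
def NeumannSol (N : ℕ) (p lam : ℝ) (U U' U'' : ℝ → ℝ) : Prop :=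
  (∀ r ∈ Icc (0:ℝ) 1, HasDerivWithinAt U (U' r) (Icc 0 1) r) ∧
  (∀ r ∈ Icc (0:ℝ) 1, HasDerivWithinAt U' (U'' r) (Icc 0 1) r) ∧
  ContinuousOn U'' (Icc 0 1) ∧
  (∀ r ∈ Ioo (0:ℝ) 1, U'' r + ((N : ℝ) - 1) / r * U' r + lam * fNL p (U r) = 0) ∧
  U' 0 = 0 ∧ U' 1 = 0 ∧ (∀ r ∈ Icc (0:ℝ) 1, 0 < U r)

/-- `(lam, U)` is a singular solution of the Neumann problem whose graph meets `1`
exactly `n` times: `U` is C² on `(0,1)`, continuous on `(0,1]`, `U'(1) = 0`, it solves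
`U'' + ((N-1)/r)U' + λ f(U) = 0` on `(0,1)`, satisfies the asymptotics
`U(r) = A(√λ r)^{-θ}(1+o(1))` as `r ↓ 0` (i.e. `r^θ U(r) → A λ^{-θ/2}`),
`U - 1` has exactly `n` zeros in `(0,1]`, and `U > 0` on `(0,1]`. -/
def SingBVPSol (N : ℕ) (p lam : ℝ) (n : ℕ) (U U' U'' : ℝ → ℝ) : Prop :=
  (∀ r ∈ Ioc (0:ℝ) 1, HasDerivWithinAt U (U' r) (Ioc 0 1) r) ∧
  (∀ r ∈ Ioo (0:ℝ) 1, HasDerivAt U' (U'' r) r) ∧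
  ContinuousOn U (Ioc 0 1) ∧
  ContinuousOn U'' (Ioo 0 1) ∧
  (∀ r ∈ Ioo (0:ℝ) 1, U'' r + ((N : ℝ) - 1) / r * U' r + lam * fNL p (U r) = 0) ∧
  U' 1 = 0 ∧
  Tendsto (fun r => r ^ thetaP p * U r) (𝓝[>] (0:ℝ))
    (𝓝 (Aconst N p * lam ^ (-(thetaP p) / 2))) ∧
  {r ∈ Ioc (0:ℝ) 1 | U r = 1}.encard = (n : ℕ∞) ∧
  (∀ r ∈ Ioc (0:ℝ) 1, 0 < U r)

/-!
Writing `τ = log s / m`, one has `s^{θ+1} (u*)'(s) = A (-θ y*(τ) + y*'(τ) / m)`, so the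
asymptotics reduce to `y*' → 0` at `-∞`; this holds for any solution of `y'' + α y' = g` with
`y` convergent and `g → 0`. The same formula gives `u* = O(s^{-θ})` and `(u*)' = O(s^{-θ-1})`
near `0`, and `p > p_S` is exactly `N - 3 - 2θ > -1`, the integrability of `s^{N-3-2θ}` at `0`.
-/

lemma exists_abs_le_of_tendsto_atBot {y : ℝ → ℝ} {L : ℝ} (hc : Continuous y)
    (hL : Tendsto y atBot (𝓝 L)) (T : ℝ) : ∃ C, ∀ t ≤ T, |y t| ≤ C := by
  obtain ⟨C₀, hC₀⟩ := (hL.norm.isBoundedUnder_le).eventually_le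
  obtain ⟨T₀, hT₀⟩ := eventually_atBot.mp hC₀
  obtain ⟨C₁, hC₁⟩ :=
    isCompact_Icc.exists_bound_of_continuousOn (hc.continuousOn (s := Icc T₀ T))
  refine ⟨max C₀ C₁, fun t ht => ?_⟩
  rcases le_or_gt t T₀ with h | h
  · exact le_max_of_le_left (hT₀ t h)
  · exact le_max_of_le_right (hC₁ t ⟨h.le, ht⟩)

/-- `w = y' + α y` has `w' → 0`, so it varies slowly; on `[t - 1, t]` it is close to
`w(c) = y'(c) + α y(c)` where, by the mean value theorem, `y'(c) = y t - y (t - 1) → 0`. -/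
lemma tendsto_deriv_atBot_of_tendsto_of_ode {y y' y'' : ℝ → ℝ} {α L : ℝ}
    (hy : ∀ t, HasDerivAt y (y' t) t) (hy' : ∀ t, HasDerivAt y' (y'' t) t)
    (hL : Tendsto y atBot (𝓝 L)) (hode : Tendsto (fun t => y'' t + α * y' t) atBot (𝓝 0)) :
    Tendsto y' atBot (𝓝 0) := by
  set w : ℝ → ℝ := fun t => y' t + α * y t
  have hw : ∀ t, HasDerivAt w (y'' t + α * y' t) t := fun t => (hy' t).add ((hy t).const_mul α)
  have hyc : Continuous y := continuous_iff_continuousAt.2 fun t => (hy t).continuousAt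
  have hwc : Continuous w := continuous_iff_continuousAt.2 fun t => (hw t).continuousAt
  choose c hc hc_slope using fun t : ℝ =>
    exists_hasDerivAt_eq_slope y y' (sub_one_lt t) hyc.continuousOn fun x _ => hy x
  choose ξ hξ hξ_slope using fun t : ℝ =>
    exists_hasDerivAt_eq_slope w _ (hc t).2 hwc.continuousOn fun x _ => hw x
  have hc_bot : Tendsto c atBot atBot := tendsto_atBot_mono (fun t => (hc t).2.le) tendsto_id
  have hξ_bot : Tendsto ξ atBot atBot := tendsto_atBot_mono (fun t => (hξ t).2.le) tendsto_id
  have hy'c : Tendsto (fun t => y' (c t)) atBot (𝓝 0) := by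
    have hshift : Tendsto (fun t => y (t - 1)) atBot (𝓝 L) :=
      hL.comp (tendsto_atBot_add_const_right _ (-1) tendsto_id)
    simpa [hc_slope] using hL.sub hshift
  have hw_slow : Tendsto (fun t => w t - w (c t)) atBot (𝓝 0) := by
    refine squeeze_zero_norm (fun t => ?_) (by simpa using (hode.comp hξ_bot).norm)
    have hlen : 0 < t - c t ∧ t - c t < 1 := ⟨sub_pos.2 (hc t).2, by linarith [(hc t).1]⟩
    have hdiff : w t - w (c t) = (y'' (ξ t) + α * y' (ξ t)) * (t - c t) := by
      rw [hξ_slope t, div_mul_cancel₀ _ hlen.1.ne']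
    rw [hdiff, norm_mul, Real.norm_of_nonneg hlen.1.le, ← Real.norm_eq_abs]
    exact mul_le_of_le_one_right (norm_nonneg _) hlen.2.le
  have hw_lim : Tendsto w atBot (𝓝 (α * L)) := by
    have := hw_slow.add (hy'c.add ((hL.comp hc_bot).const_mul α))
    rw [zero_add, zero_add] at this
    exact this.congr fun t => sub_add_cancel (w t) (w (c t))
  have := hw_lim.sub (hL.const_mul α)
  simp only [w, add_sub_cancel_right, sub_self] at this
  exact this

lemma integrableOn_Ioo_rpow {r : ℝ} (hr : -1 < r) (δ : ℝ) :
    IntegrableOn (fun s : ℝ => s ^ r) (Ioo 0 δ) :=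
  (intervalIntegrable_iff.1 (intervalIntegral.intervalIntegrable_rpow' hr)).mono_set
    (Ioo_subset_Ioc_self.trans Ioc_subset_uIoc)

lemma sq_rpow_mul_pow {s : ℝ} (hs : 0 < s) (a : ℝ) (n : ℕ) :
    (s ^ a) ^ 2 * s ^ n = s ^ (n + 2 * a) := by
  rw [← Real.rpow_mul_natCast hs.le, ← Real.rpow_natCast s n, ← Real.rpow_add hs]
  ring_nf

lemma integrableOn_sq_add_sq_mul_pow {u v : ℝ → ℝ} {θ C D δ : ℝ} {n : ℕ}
    (hn : 2 * θ + 1 < n)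
    (hu : AEStronglyMeasurable u (volume.restrict (Ioo 0 δ)))
    (hv : AEStronglyMeasurable v (volume.restrict (Ioo 0 δ)))
    (hub : ∀ s ∈ Ioo 0 δ, |u s| ≤ C * s ^ (-θ))
    (hvb : ∀ s ∈ Ioo 0 δ, |v s| ≤ D * s ^ (-θ - 1)) :
    IntegrableOn (fun s => (u s ^ 2 + v s ^ 2) * s ^ n) (Ioo 0 δ) := by
  have hmaj : IntegrableOn
      (fun s : ℝ => C ^ 2 * s ^ (n + 2 * -θ) + D ^ 2 * s ^ (n + 2 * (-θ - 1))) (Ioo 0 δ) :=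
    ((integrableOn_Ioo_rpow (by linarith) δ).const_mul _).add
      ((integrableOn_Ioo_rpow (by linarith) δ).const_mul _)
  refine hmaj.mono' (((hu.pow 2).add (hv.pow 2)).mul (continuous_pow n).aestronglyMeasurable) ?_
  rw [ae_restrict_iff' measurableSet_Ioo]
  refine ae_of_all _ fun s hs => ?_
  have hs0 : 0 < s := hs.1
  have hsq {f : ℝ → ℝ} {K a : ℝ} (hf : |f s| ≤ K * s ^ a) :
      f s ^ 2 * s ^ n ≤ K ^ 2 * s ^ (n + 2 * a) := by
    rw [← sq_rpow_mul_pow hs0, ← mul_assoc, ← mul_pow, ← sq_abs]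
    gcongr
  rw [Real.norm_of_nonneg (by positivity), add_mul]
  exact add_le_add (hsq (hub s hs)) (hsq (hvb s hs))

section SingularSolution

variable {N : ℕ} {p : ℝ}

lemma thetaP_pos (hp : 1 < p) : 0 < thetaP p :=
  div_pos two_pos (sub_pos.2 hp)

lemma two_mul_thetaP_lt (hN : 3 ≤ N) (hp : 1 < p) (hpS : pSob N < p) :
    2 * thetaP p < N - 2 := by
  have hN2 : (0 : ℝ) < N - 2 := by
    have : (3 : ℝ) ≤ N := by exact_mod_cast hN
    linarith
  rw [pSob, div_lt_iff₀ hN2] at hpS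
  rw [thetaP, ← mul_div_assoc, div_lt_iff₀ (sub_pos.2 hp)]
  linarith

lemma mConst_pos (hN : 3 ≤ N) (hp : 1 < p) (hpS : pSob N < p) : 0 < mConst N p := by
  have hθ := thetaP_pos hp
  have := two_mul_thetaP_lt hN hp hpS
  exact Real.rpow_pos_of_pos (mul_pos hθ (by linarith)) _

lemma IsEntireSingODE.tendsto_deriv_atBot {y y' y'' : ℝ → ℝ}
    (h : IsEntireSingODE N p y y' y'') (hm : 0 < mConst N p) : Tendsto y' atBot (𝓝 0) := by
  obtain ⟨hy, hy', -, hode, hy1⟩ := h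
  set m := mConst N p
  have hexp : Tendsto (fun t => Real.exp (2 * m * t)) atBot (𝓝 0) :=
    Real.tendsto_exp_atBot.comp (tendsto_id.const_mul_atBot (by positivity))
  have hrhs : Tendsto (fun t => y t - y t ^ p + m ^ 2 * Real.exp (2 * m * t) * y t) atBot
      (𝓝 (1 - 1 ^ p + m ^ 2 * 0 * 1)) :=
    (hy1.sub (hy1.rpow_const (Or.inl one_ne_zero))).add ((hexp.const_mul _).mul hy1)
  rw [Real.one_rpow, sub_self, mul_zero, zero_mul, add_zero] at hrhs
  refine tendsto_deriv_atBot_of_tendsto_of_ode (α := alphaConst N p) hy hy' hy1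
    (hrhs.congr fun t => ?_)
  linarith [hode t]

variable {y y' : ℝ → ℝ}

lemma hasDerivAt_ustar (hy : ∀ t, HasDerivAt y (y' t) t) {s : ℝ} (hs : 0 < s) :
    HasDerivAt (ustar N p y) (Aconst N p * s ^ (-thetaP p - 1) *
      (-thetaP p * y (Real.log s / mConst N p) + y' (Real.log s / mConst N p) / mConst N p)) s := by
  have hτ : HasDerivAt (fun s => Real.log s / mConst N p) (s⁻¹ / mConst N p) s :=
    (Real.hasDerivAt_log hs.ne').div_const _
  refine (((Real.hasDerivAt_rpow_const (p := -thetaP p) (Or.inl hs.ne')).const_mul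
    (Aconst N p)).mul ((hy _).comp s hτ)).congr_deriv ?_
  rw [Real.rpow_sub hs, Real.rpow_one, Function.comp_apply]
  ring

lemma tendsto_rpow_mul_deriv_ustar (hy : ∀ t, HasDerivAt y (y' t) t)
    (hy1 : Tendsto y atBot (𝓝 1)) (hy'0 : Tendsto y' atBot (𝓝 0)) (hm : 0 < mConst N p) :
    Tendsto (fun s => s ^ (thetaP p + 1) * deriv (ustar N p y) s) (𝓝[>] 0)
      (𝓝 (-(thetaP p) * Aconst N p)) := by
  set θ := thetaP p
  set m := mConst N p
  set A := Aconst N p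
  have hτ : Tendsto (fun s => Real.log s / m) (𝓝[>] 0) atBot :=
    Real.tendsto_log_nhdsGT_zero.atBot_div_const hm
  have hlim : Tendsto (fun s => A * (-θ * y (Real.log s / m) + y' (Real.log s / m) / m))
      (𝓝[>] 0) (𝓝 (A * (-θ * 1 + 0 / m))) :=
    (((hy1.comp hτ).const_mul _).add ((hy'0.comp hτ).div_const _)).const_mul _
  rw [mul_one, zero_div, add_zero, mul_comm] at hlim
  refine hlim.congr' ?_
  filter_upwards [self_mem_nhdsWithin] with s hs
  have hpow : s ^ (θ + 1) * s ^ (-θ - 1) = 1 := by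
    rw [← Real.rpow_add hs, show θ + 1 + (-θ - 1) = 0 by ring, Real.rpow_zero]
  rw [(hasDerivAt_ustar hy hs).deriv]
  linear_combination (-(A * (-θ * y (Real.log s / m) + y' (Real.log s / m) / m))) * hpow

lemma integrableOn_ustar_sq_add_deriv_sq (hN : 1 ≤ N) (hθ : 2 * thetaP p < N - 2)
    (hy : ∀ t, HasDerivAt y (y' t) t) (hy'c : Continuous y') {L L' : ℝ}
    (hyL : Tendsto y atBot (𝓝 L)) (hy'L : Tendsto y' atBot (𝓝 L')) (hm : 0 < mConst N p)
    (δ : ℝ) :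
    IntegrableOn (fun s => (ustar N p y s ^ 2 + deriv (ustar N p y) s ^ 2) * s ^ (N - 1))
      (Ioo 0 δ) := by
  set θ := thetaP p
  set m := mConst N p
  set A := Aconst N p
  have hyc : Continuous y := continuous_iff_continuousAt.2 fun t => (hy t).continuousAt
  obtain ⟨C, hC⟩ := exists_abs_le_of_tendsto_atBot hyc hyL (Real.log δ / m)
  obtain ⟨D, hD⟩ := exists_abs_le_of_tendsto_atBot hy'c hy'L (Real.log δ / m)
  have hτ : ∀ s ∈ Ioo 0 δ, Real.log s / m ≤ Real.log δ / m := fun s hs =>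
    div_le_div_of_nonneg_right (Real.log_le_log hs.1 hs.2.le) hm.le
  have hcont : ContinuousOn (ustar N p y) (Ioo 0 δ) := fun s hs =>
    (hasDerivAt_ustar hy hs.1).continuousAt.continuousWithinAt
  have hn : 2 * θ + 1 < ((N - 1 : ℕ) : ℝ) := by
    rw [Nat.cast_sub hN, Nat.cast_one]
    linarith
  refine integrableOn_sq_add_sq_mul_pow hn (hcont.aestronglyMeasurable measurableSet_Ioo)
    (measurable_deriv _).aestronglyMeasurable (C := |A| * C) (D := |A| * (|θ| * C + D / m))
    (fun s hs => ?_) (fun s hs => ?_) <;> have hs0 : 0 < s := hs.1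
  · rw [ustar, abs_mul, abs_mul, abs_of_pos (Real.rpow_pos_of_pos hs0 _), mul_right_comm]
    gcongr
    exact hC _ (hτ s hs)
  · rw [(hasDerivAt_ustar hy hs0).deriv, abs_mul, abs_mul,
      abs_of_pos (Real.rpow_pos_of_pos hs0 _), mul_right_comm]
    gcongr
    calc |-θ * y (Real.log s / m) + y' (Real.log s / m) / m|
        ≤ |θ| * |y (Real.log s / m)| + |y' (Real.log s / m)| / m := by
          rw [← abs_of_pos hm, ← abs_div, abs_of_pos hm, ← abs_neg θ, ← abs_mul]
          exact abs_add_le _ _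
      _ ≤ |θ| * C + D / m := by
          gcongr
          exacts [hC _ (hτ s hs), hD _ (hτ s hs)]

end SingularSolution

/-- `(u*)'(s) = -θ A s^{-θ-1}(1+o(1))` as `s ↓ 0`, and
`∫₀^δ (u*(s)² + (u*)'(s)²) s^{N-1} ds < ∞` for every `δ > 0`. -/
theorem ustar_deriv_asymptotics_and_H1 (N : ℕ) (hN : 3 ≤ N) (p : ℝ) (hp : 1 < p)
    (hpS : pSob N < p)
    (ys ys' ys'' : ℝ → ℝ) (hys : IsEntireSingODE N p ys ys' ys'') :
    Tendsto (fun s => s ^ (thetaP p + 1) * deriv (ustar N p ys) s) (𝓝[>] (0:ℝ))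
      (𝓝 (-(thetaP p) * Aconst N p)) ∧
    ∀ δ > (0:ℝ),
      IntegrableOn
        (fun s => (ustar N p ys s ^ 2 + (deriv (ustar N p ys) s) ^ 2) * s ^ (N - 1))
        (Ioo 0 δ) := by
  have hm := mConst_pos hN hp hpS
  have hy'0 := hys.tendsto_deriv_atBot hm
  obtain ⟨hy, hy', -, -, hy1⟩ := hys
  have hy'c : Continuous ys' := continuous_iff_continuousAt.2 fun t => (hy' t).continuousAt
  exact ⟨tendsto_rpow_mul_deriv_ustar hy hy1 hy'0 hm, fun δ _ =>
    integrableOn_ustar_sq_add_deriv_sq (by omega) (two_mul_thetaP_lt hN hp hpS) hy hy'c hy1 hy'0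
      hm δ⟩
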